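/- Let f : X̃ → X be a harmonic morphism of finite graphs with X connected. Then for any vertex v ∈ V(X) and any half-edge h ∈ H(X), the quantities Σ_{ṽ ∈ f^{-1}(v)} d_f(ṽ) and |f^{-1}(h)| are equal, and this common value (the global degree of f) is independent of the choice of v or h. -/

import Mathlib

open Finset

/-- Connectivity of a graph presented by half-edges: root map `r` and involution `ι`. -/
def HalfConn {V H : Type*} (r : H → V) (ι : H → H) : Prop :=
  ∀ u v : V, Relation.ReflTransGen (fun a b => ∃ h, r h = a ∧ r (ι h) = b) u v

/-- The (half-edge) Laplacian matrix of a graph: the `(u,v)` entry is the coefficient of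
`u` in `L(v) = Σ_{h ∈ T_v X} (v - r(ι h))`. -/
def halfLapMat {V H : Type*} [Fintype H] [DecidableEq V]
    (r : H → V) (ι : H → H) : Matrix V V ℤ :=
  Matrix.of fun u v => ∑ h : H,
    if r h = v then (if r h = u then 1 else 0) - (if r (ι h) = u then 1 else 0) else 0

/-- Degree (sum of coefficients) of a divisor, as a linear map. -/
def degHom (V : Type*) [Fintype V] : (V → ℤ) →ₗ[ℤ] ℤ where
  toFun d := ∑ v, d v
  map_add' x y := Finset.sum_add_distrib
  map_smul' c x := by simp [Finset.mul_sum]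

/-- Jacobian: degree-zero divisors modulo the image of (the linear map given by) `M`. -/
def jacOfMat {V : Type*} [Fintype V] (M : Matrix V V ℤ) :=
  LinearMap.ker (degHom V) ⧸
    Submodule.comap (LinearMap.ker (degHom V)).subtype (LinearMap.range M.mulVecLin)

/-- Pushforward of divisors along a map of vertex sets: add up the chips in each fiber. -/
def pushV {V W : Type*} [Fintype V] [DecidableEq W] (p : V → W) (d : V → ℤ) : W → ℤ :=
  fun w => ∑ v ∈ Finset.univ.filter (fun v => p v = w), d v

/-- The divisor consisting of a single chip at `v`. -/
def indic {α : Type*} [DecidableEq α] (v : α) : α → ℤ := fun u => if u = v then 1 else 0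

/-!
Pushing the local degrees forward gives a function `g` on the vertices of `X`. Harmonicity says
that the half-edges of `X̃` over a half-edge `h` are counted, vertex by vertex of the fibre over
the root of `h`, by the local degrees; so `|f⁻¹(h)| = g(r h)`. The involution of `X̃` maps
`f⁻¹(h)` bijectively onto `f⁻¹(ι h)`, hence `g` takes the same value at both ends of every edge,
and by connectedness it is constant.
-/

theorem HalfConn.apply_eq {V H β : Type*} {r : H → V} {ι : H → H} (hconn : HalfConn r ι)
    {g : V → β} (hg : ∀ h, g (r h) = g (r (ι h))) (u v : V) : g u = g v := by
  induction hconn u v with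
  | refl => rfl
  | tail _ hstep ih =>
    obtain ⟨h, rfl, rfl⟩ := hstep
    exact ih.trans (hg h)

theorem card_fiber_apply_involution {H1 H2 : Type*} [Fintype H1] [DecidableEq H2]
    {ι1 : H1 → H1} {ι2 : H2 → H2} (hι1 : Function.Involutive ι1) (hι2 : Function.Involutive ι2)
    {fH : H1 → H2} (hι : ∀ h, fH (ι1 h) = ι2 (fH h)) (h : H2) :
    #{h' | fH h' = ι2 h} = #{h' | fH h' = h} := by
  refine card_bij' (fun h' _ => ι1 h') (fun h' _ => ι1 h') ?_ ?_ (fun h' _ => hι1 h')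
    (fun h' _ => hι1 h')
  · intro h' hh'
    simp only [mem_filter, mem_univ, true_and] at hh' ⊢
    rw [hι, hh', hι2]
  · intro h' hh'
    simp only [mem_filter, mem_univ, true_and] at hh' ⊢
    rw [hι, hh']

theorem card_fiber_eq_pushV_root {V1 H1 V2 H2 : Type*} [Fintype V1] [Fintype H1]
    [DecidableEq V1] [DecidableEq V2] [DecidableEq H2]
    {r1 : H1 → V1} {r2 : H2 → V2} {fV : V1 → V2} {fH : H1 → H2}
    (hr : ∀ h, fV (r1 h) = r2 (fH h)) {d : V1 → ℤ}
    (harm : ∀ (vt : V1) (h : H2), r2 h = fV vt → d vt = (#{h' | r1 h' = vt ∧ fH h' = h} : ℤ))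
    (h : H2) : (#{h' | fH h' = h} : ℤ) = pushV fV d (r2 h) := by
  rw [card_eq_sum_card_fiberwise (f := r1) (t := {vt | fV vt = r2 h}), Nat.cast_sum]
  · refine sum_congr rfl fun vt hvt => ?_
    rw [mem_filter] at hvt
    rw [harm vt h hvt.2.symm, filter_filter]
    simp only [and_comm]
  · intro h' hh'
    simp only [coe_filter, Set.mem_ofPred_eq, mem_univ, true_and] at hh' ⊢
    rw [hr, hh']

theorem stmt10_general {V1 H1 V2 H2 : Type*} [Fintype V1] [Fintype H1]
    [DecidableEq V1] [DecidableEq V2] [DecidableEq H2]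
    (r1 : H1 → V1) (ι1 : H1 → H1) (hι1 : ∀ h, ι1 (ι1 h) = h)
    (r2 : H2 → V2) (ι2 : H2 → H2) (hι2 : ∀ h, ι2 (ι2 h) = h)
    (fV : V1 → V2) (fH : H1 → H2)
    (hr : ∀ h, fV (r1 h) = r2 (fH h)) (hι : ∀ h, fH (ι1 h) = ι2 (fH h))
    (d : V1 → ℤ)
    (harm : ∀ (vt : V1) (h : H2), r2 h = fV vt →
      d vt = ((Finset.univ.filter (fun h' => r1 h' = vt ∧ fH h' = h)).card : ℤ))
    (hconn : HalfConn r2 ι2) :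
    ∃ D : ℤ,
      (∀ v : V2, ∑ vt ∈ Finset.univ.filter (fun vt => fV vt = v), d vt = D) ∧
      (∀ h : H2, ((Finset.univ.filter (fun h' => fH h' = h)).card : ℤ) = D) := by
  have hfiber := card_fiber_eq_pushV_root hr harm
  have hconst : ∀ u v, pushV fV d u = pushV fV d v := hconn.apply_eq fun h => by
    rw [← hfiber, ← hfiber, card_fiber_apply_involution hι1 hι2 hι]
  rcases isEmpty_or_nonempty V2 with _ | ⟨⟨v₀⟩⟩
  · exact ⟨0, fun v => isEmptyElim v, fun h => isEmptyElim (r2 h)⟩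
  · exact ⟨pushV fV d v₀, fun v => hconst v v₀, fun h => (hfiber h).trans (hconst _ v₀)⟩

/-- a harmonic morphism `f : X̃ → X` of finite graphs with `X` connected
has a well-defined global degree: `Σ_{vt ∈ f⁻¹(v)} d_f(vt)` and `|f⁻¹(h)|` are equal to a
common value independent of the vertex `v` and the half-edge `h`. -/
theorem stmt10 {V1 H1 V2 H2 : Type*} [Fintype V1] [Fintype H1] [Fintype V2] [Fintype H2]
    [DecidableEq V1] [DecidableEq V2] [DecidableEq H1] [DecidableEq H2]
    (r1 : H1 → V1) (ι1 : H1 → H1) (hι1 : ∀ h, ι1 (ι1 h) = h)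
    (r2 : H2 → V2) (ι2 : H2 → H2) (hι2 : ∀ h, ι2 (ι2 h) = h)
    (fV : V1 → V2) (fH : H1 → H2)
    (hr : ∀ h, fV (r1 h) = r2 (fH h)) (hι : ∀ h, fH (ι1 h) = ι2 (fH h))
    (d : V1 → ℤ)
    (harm : ∀ (vt : V1) (h : H2), r2 h = fV vt →
      d vt = ((Finset.univ.filter (fun h' => r1 h' = vt ∧ fH h' = h)).card : ℤ))
    (hconn : HalfConn r2 ι2) :
    ∃ D : ℤ,
      (∀ v : V2, ∑ vt ∈ Finset.univ.filter (fun vt => fV vt = v), d vt = D) ∧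
      (∀ h : H2, ((Finset.univ.filter (fun h' => fH h' = h)).card : ℤ) = D) :=
  stmt10_general r1 ι1 hι1 r2 ι2 hι2 fV fH hr hι d harm hconn
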